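/- arXiv:1001.0926 — 5 statements merged into one kernel-verified Lean document; each statement's English description precedes it below -/
import Mathlib

section
/- Let ξ = e^{2πi/8}. There is no element q in the field ℚ(ξ) with q·conj(q) = 2115. -/
/-!
Write `q = a + b ξ + c ξ² + d ξ³` with `a, b, c, d ∈ ℚ`. Since `conj ξ = -ξ³` and
`ξ - ξ³ = √2`, `q · conj q = (a² + b² + c² + d²) + (ab + bc + cd - ad) √2`, so by irrationality
of `√2` we would need `a² + b² + c² + d² = 2115` and `ab + bc + cd = ad`. The second equation
turns Lagrange's identity into `(a² + c²)(b² + d²) = 2 (ab + cd)²`. After clearing denominators,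
reduce modulo `p = 47 ≡ 7 (mod 8)`: the two factors sum to `0` and `-2` is not a square, so both
vanish; `-1` is not a square either, so `p` divides all four numerators. As `p ∥ 2115`, `p` then
divides the common denominator as well, and infinite descent gives a contradiction.
-/

open Polynomial IntermediateField

namespace ZMod

variable {p : ℕ} [Fact p.Prime]

theorem eq_zero_of_sq_add_sq_eq_zero (hp : p % 4 = 3) {x y : ZMod p} (h : x ^ 2 + y ^ 2 = 0) :
    x = 0 := by
  by_contra hx
  exact mod_four_ne_three_of_sq_eq_neg_sq hx (eq_neg_of_add_eq_zero_left h) hp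

theorem eq_zero_of_add_eq_zero_of_mul_eq_two_mul_sq (hp : p % 8 = 7) {x y u : ZMod p}
    (hxy : x + y = 0) (h : x * y = 2 * u ^ 2) : x = 0 := by
  obtain rfl : y = -x := eq_neg_of_add_eq_zero_right hxy
  by_contra hx
  have hu : u ≠ 0 := by
    rintro rfl
    exact hx (pow_eq_zero_iff two_ne_zero |>.mp (by linear_combination -h))
  have hsq : IsSquare (-2 : ZMod p) := ⟨x / u, by field_simp; linear_combination h⟩
  have hp2 : p ≠ 2 := by rintro rfl; norm_num at hp
  have := (exists_sq_eq_neg_two_iff hp2).mp hsq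
  omega

end ZMod

section Descent

variable {p : ℕ} [Fact p.Prime]

theorem Int.prime_dvd_of_dvd_sum_sq_of_mul_add_eq (hp : p % 8 = 7) {A B C D : ℤ}
    (hsum : (p : ℤ) ∣ A ^ 2 + B ^ 2 + C ^ 2 + D ^ 2) (hform : A * B + B * C + C * D = A * D) :
    (p : ℤ) ∣ A ∧ (p : ℤ) ∣ B ∧ (p : ℤ) ∣ C ∧ (p : ℤ) ∣ D := by
  simp only [← ZMod.intCast_zmod_eq_zero_iff_dvd] at hsum ⊢
  have hform' := congrArg (Int.cast : ℤ → ZMod p) hform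
  push_cast at hsum hform'
  generalize (A : ZMod p) = a at *
  generalize (B : ZMod p) = b at *
  generalize (C : ZMod p) = c at *
  generalize (D : ZMod p) = d at *
  -- Lagrange: `(a² + c²)(b² + d²) = (ab + cd)² + (ad - bc)²`, and `ad - bc = ab + cd`.
  have hprod : (a ^ 2 + c ^ 2) * (b ^ 2 + d ^ 2) = 2 * (a * b + c * d) ^ 2 := by
    linear_combination -(a * d - b * c + a * b + c * d) * hform'
  have hac := ZMod.eq_zero_of_add_eq_zero_of_mul_eq_two_mul_sq hp
    (by linear_combination hsum) hprod
  have hbd := ZMod.eq_zero_of_add_eq_zero_of_mul_eq_two_mul_sq hp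
    (by linear_combination hsum) ((mul_comm _ _).trans hprod)
  have hp4 : p % 4 = 3 := by omega
  exact ⟨ZMod.eq_zero_of_sq_add_sq_eq_zero hp4 hac, ZMod.eq_zero_of_sq_add_sq_eq_zero hp4 hbd,
    ZMod.eq_zero_of_sq_add_sq_eq_zero hp4 ((add_comm _ _).trans hac),
    ZMod.eq_zero_of_sq_add_sq_eq_zero hp4 ((add_comm _ _).trans hbd)⟩

theorem Int.eq_zero_of_sum_sq_eq_mul_sq_of_mul_add_eq (hp : p % 8 = 7) {n : ℤ}
    (hpn : (p : ℤ) ∣ n) (hpn2 : ¬(p : ℤ) ^ 2 ∣ n) {A B C D N : ℤ}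
    (hsum : A ^ 2 + B ^ 2 + C ^ 2 + D ^ 2 = n * N ^ 2) (hform : A * B + B * C + C * D = A * D) :
    N = 0 := by
  induction h : N.natAbs using Nat.strong_induction_on generalizing A B C D N with
  | _ k ih =>
  subst h
  by_contra hN
  obtain ⟨⟨A, rfl⟩, ⟨B, rfl⟩, ⟨C, rfl⟩, ⟨D, rfl⟩⟩ :=
    Int.prime_dvd_of_dvd_sum_sq_of_mul_add_eq hp (hsum ▸ hpn.mul_right _) hform
  have hp0 : (p : ℤ) ≠ 0 := by exact_mod_cast (Fact.out : p.Prime).ne_zero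
  obtain ⟨N, rfl⟩ : (p : ℤ) ∣ N := by
    by_contra hpN
    have hcop : IsCoprime ((p : ℤ) ^ 2) (N ^ 2) :=
      ((Nat.prime_iff_prime_int.mp Fact.out).coprime_iff_not_dvd.mpr hpN).pow
    exact hpn2 (hcop.dvd_of_dvd_mul_right
      ⟨A ^ 2 + B ^ 2 + C ^ 2 + D ^ 2, by linear_combination -hsum⟩)
  have hsum' : A ^ 2 + B ^ 2 + C ^ 2 + D ^ 2 = n * N ^ 2 :=
    mul_left_cancel₀ (pow_ne_zero 2 hp0) (by linear_combination hsum)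
  have hform' : A * B + B * C + C * D = A * D :=
    mul_left_cancel₀ (pow_ne_zero 2 hp0) (by linear_combination hform)
  have hlt : N.natAbs < ((p : ℤ) * N).natAbs := by
    have := (Fact.out : p.Prime).one_lt
    have : 0 < N.natAbs := Int.natAbs_pos.mpr (by rintro rfl; simp at hN)
    rw [Int.natAbs_mul, Int.natAbs_natCast]
    nlinarith
  exact hN (by rw [ih _ hlt hsum' hform' rfl, mul_zero])

theorem Rat.exists_intCast_eq_mul_of_den_dvd (q : ℚ) {m : ℤ} (h : (q.den : ℤ) ∣ m) :
    ∃ A : ℤ, (A : ℚ) = q * m := by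
  obtain ⟨k, rfl⟩ := h
  exact ⟨q.num * k, by push_cast; rw [← Rat.mul_den_eq_num]; ring⟩

theorem Rat.sum_sq_ne_of_mul_add_eq (hp : p % 8 = 7) {n : ℤ}
    (hpn : (p : ℤ) ∣ n) (hpn2 : ¬(p : ℤ) ^ 2 ∣ n) {a b c d : ℚ}
    (hform : a * b + b * c + c * d = a * d) : a ^ 2 + b ^ 2 + c ^ 2 + d ^ 2 ≠ n := by
  intro hsum
  set N : ℤ := a.den * b.den * c.den * d.den
  have hN : N ≠ 0 := by positivity
  obtain ⟨A, hA⟩ := a.exists_intCast_eq_mul_of_den_dvd (m := N)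
    ⟨b.den * c.den * d.den, by ring⟩
  obtain ⟨B, hB⟩ := b.exists_intCast_eq_mul_of_den_dvd (m := N)
    ⟨a.den * c.den * d.den, by ring⟩
  obtain ⟨C, hC⟩ := c.exists_intCast_eq_mul_of_den_dvd (m := N)
    ⟨a.den * b.den * d.den, by ring⟩
  obtain ⟨D, hD⟩ := d.exists_intCast_eq_mul_of_den_dvd (m := N)
    ⟨a.den * b.den * c.den, by ring⟩
  have hsumℚ : (A : ℚ) ^ 2 + B ^ 2 + C ^ 2 + D ^ 2 = n * N ^ 2 := by
    rw [hA, hB, hC, hD]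
    linear_combination (N : ℚ) ^ 2 * hsum
  have hformℚ : (A : ℚ) * B + B * C + C * D = A * D := by
    rw [hA, hB, hC, hD]
    linear_combination (N : ℚ) ^ 2 * hform
  exact hN (Int.eq_zero_of_sum_sq_eq_mul_sq_of_mul_add_eq hp hpn hpn2
    (by exact_mod_cast hsumℚ) (by exact_mod_cast hformℚ))

end Descent

theorem IntermediateField.exists_natDegree_lt_aeval_eq {K L : Type*} [Field K] [Field L]
    [Algebra K L] {x y : L} {f : K[X]} (hf : f.Monic) (hfx : aeval x f = 0) (hy : y ∈ K⟮x⟯) :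
    ∃ g : K[X], g.natDegree < f.natDegree ∧ aeval x g = y := by
  have hx : IsAlgebraic K x := ⟨f, hf.ne_zero, hfx⟩
  rw [← mem_toSubalgebra, adjoin_simple_toSubalgebra_of_isAlgebraic hx,
    Algebra.adjoin_singleton_eq_range_aeval] at hy
  obtain ⟨g, rfl⟩ := hy
  have hf1 : f ≠ 1 := by rintro rfl; simp at hfx
  exact ⟨g %ₘ f, natDegree_modByMonic_lt g hf hf1, aeval_modByMonic_eq_self_of_root hfx⟩

theorem Subfield.exists_eq_of_mem_closure_of_pow_four_eq_neg_one {L : Type*} [Field L] [CharZero L]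
    {ζ q : L} (hζ : ζ ^ 4 = -1) (hq : q ∈ Subfield.closure {ζ}) :
    ∃ a b c d : ℚ, q = a + b * ζ + c * ζ ^ 2 + d * ζ ^ 3 := by
  have hle : Subfield.closure {ζ} ≤ ℚ⟮ζ⟯.toSubfield :=
    Subfield.closure_le.mpr (Set.singleton_subset_iff.mpr (mem_adjoin_simple_self ℚ ζ))
  have hf : (X ^ 4 + 1 : ℚ[X]).Monic := by monicity!
  obtain ⟨g, hg, rfl⟩ := exists_natDegree_lt_aeval_eq hf (by simp [hζ]) (hle hq)
  replace hg : g.natDegree < 4 := by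
    rwa [show (X ^ 4 + 1 : ℚ[X]).natDegree = 4 by compute_degree!] at hg
  refine ⟨g.coeff 0, g.coeff 1, g.coeff 2, g.coeff 3, ?_⟩
  simp [aeval_eq_sum_range' hg, Finset.sum_range_succ, Rat.smul_def]

theorem mul_sub_eq_of_pow_four_eq_neg_one {R : Type*} [CommRing R] {ζ : R} (hζ : ζ ^ 4 = -1)
    (a b c d : R) :
    (a + b * ζ + c * ζ ^ 2 + d * ζ ^ 3) * (a - d * ζ - c * ζ ^ 2 - b * ζ ^ 3) =
      a ^ 2 + b ^ 2 + c ^ 2 + d ^ 2 + (a * b + b * c + c * d - a * d) * (ζ - ζ ^ 3) := by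
  linear_combination -(b ^ 2 + c ^ 2 + d ^ 2 + (b * c + c * d) * ζ + b * d * ζ ^ 2) * hζ

theorem Rat.eq_and_eq_zero_of_add_mul_sqrt_two_eq {x y r : ℚ} (h : (x : ℝ) + y * √2 = r) :
    x = r ∧ y = 0 := by
  obtain rfl : y = 0 := by
    by_contra hy
    exact (irrational_sqrt_two.ratCast_mul hy).ratCast_add x ⟨r, h.symm⟩
  simpa using h

section EighthRootOfUnity

open Complex ComplexConjugate

local notation "ξ" => exp (2 * Real.pi * I / 8)

theorem Complex.exp_two_pi_mul_I_div_eight : ξ = (√2 / 2 : ℝ) * (1 + I) := by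
  rw [show 2 * (Real.pi : ℂ) * I / 8 = (Real.pi / 4 : ℝ) * I by push_cast; ring, exp_mul_I,
    ← ofReal_cos, ← ofReal_sin, Real.cos_pi_div_four, Real.sin_pi_div_four]
  ring

theorem Complex.exp_two_pi_mul_I_div_eight_sq : ξ ^ 2 = I := by
  rw [← exp_nat_mul]
  convert exp_pi_div_two_mul_I using 2
  push_cast
  ring

theorem Complex.exp_two_pi_mul_I_div_eight_pow_four : ξ ^ 4 = -1 := by
  rw [show 4 = 2 * 2 by rfl, pow_mul, exp_two_pi_mul_I_div_eight_sq, I_sq]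

theorem Complex.conj_exp_two_pi_mul_I_div_eight : conj ξ = -ξ ^ 3 := by
  rw [pow_succ', exp_two_pi_mul_I_div_eight_sq, exp_two_pi_mul_I_div_eight, map_mul, conj_ofReal]
  simp only [map_add, map_one, conj_I]
  linear_combination ((√2 / 2 : ℝ) : ℂ) * I_sq

theorem Complex.exp_two_pi_mul_I_div_eight_sub_pow_three : ξ - ξ ^ 3 = √2 := by
  rw [show ξ - ξ ^ 3 = ξ * (1 - ξ ^ 2) by ring, exp_two_pi_mul_I_div_eight_sq,
    exp_two_pi_mul_I_div_eight]
  push_cast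
  linear_combination -(√2 : ℂ) / 2 * I_sq

theorem Complex.mul_conj_eq_of_exp_two_pi_mul_I_div_eight (a b c d : ℚ) :
    (a + b * ξ + c * ξ ^ 2 + d * ξ ^ 3 : ℂ) * conj (a + b * ξ + c * ξ ^ 2 + d * ξ ^ 3) =
      (((a ^ 2 + b ^ 2 + c ^ 2 + d ^ 2 : ℚ) : ℝ) +
        (a * b + b * c + c * d - a * d : ℚ) * √2 : ℝ) := by
  have h4 := exp_two_pi_mul_I_div_eight_pow_four
  have hconj :
      conj (a + b * ξ + c * ξ ^ 2 + d * ξ ^ 3 : ℂ) = a - d * ξ - c * ξ ^ 2 - b * ξ ^ 3 := by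
    simp only [map_add, map_mul, map_pow, map_ratCast, conj_exp_two_pi_mul_I_div_eight]
    linear_combination (c * ξ ^ 2 - d * ξ ^ 5 + d * ξ) * h4
  rw [hconj, mul_sub_eq_of_pow_four_eq_neg_one h4, exp_two_pi_mul_I_div_eight_sub_pow_three]
  push_cast
  ring

end EighthRootOfUnity

/-- There is no `q` in the field `ℚ(ξ)`, `ξ = e^{2πi/8}`, with
`q·conj(q) = 2115`. -/
theorem no_norm_2115_in_Q_xi :
    let ξ : ℂ := Complex.exp (2 * Real.pi * Complex.I / 8)
    ¬ ∃ q ∈ Subfield.closure ({ξ} : Set ℂ), q * (starRingEnd ℂ) q = 2115 := by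
  intro ξ
  rintro ⟨q, hq, hnorm⟩
  obtain ⟨a, b, c, d, rfl⟩ := Subfield.exists_eq_of_mem_closure_of_pow_four_eq_neg_one
    Complex.exp_two_pi_mul_I_div_eight_pow_four hq
  have hreal := (Complex.mul_conj_eq_of_exp_two_pi_mul_I_div_eight a b c d).symm.trans hnorm
  obtain ⟨hsum, hform⟩ := Rat.eq_and_eq_zero_of_add_mul_sqrt_two_eq (r := 2115)
    (by exact_mod_cast hreal)
  have : Fact (Nat.Prime 47) := ⟨by norm_num⟩
  exact Rat.sum_sq_ne_of_mul_add_eq (p := 47) (n := 2115) (by norm_num) (by norm_num)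
    (by norm_num) (sub_eq_zero.mp hform) (by exact_mod_cast hsum)
end

section
/- The Laurent polynomial t⁻¹ − 3 + t ∈ ℤ[t, t⁻¹] cannot be written in the form ± t^k · f(t) · f(t⁻¹) for any f ∈ ℤ[t, t⁻¹] and k ∈ ℤ. -/
/-!
Evaluate at `t = -1`. The left side becomes `-5`, while on the right `t^k` and `ε` become `±1`
and `f(t⁻¹)` takes the same value as `f(t)` because `-1` is its own inverse. Taking absolute
values, `5 = |f(-1)|²`, but `5` is not a perfect square.
-/

open LaurentPolynomial

/-- The ring automorphism of `ℤ[t,t⁻¹]` given by `t ↦ t⁻¹`. -/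
noncomputable def laurentInvert : LaurentPolynomial ℤ ≃ₐ[ℤ] LaurentPolynomial ℤ :=
  AddMonoidAlgebra.domCongr ℤ ℤ (AddEquiv.neg ℤ)

theorem LaurentPolynomial.eval₂_invert {R S : Type*} [CommSemiring R] [CommSemiring S]
    (f : R →+* S) (x : Sˣ) (p : R[T;T⁻¹]) : eval₂ f x (invert p) = eval₂ f x⁻¹ p := by
  induction p using LaurentPolynomial.induction_on' with
  | add p q hp hq => rw [map_add, map_add, map_add, hp, hq]
  | C_mul_T n a => simp [zpow_neg]

/-- The Laurent polynomial `t⁻¹ − 3 + t ∈ ℤ[t,t⁻¹]` cannot be written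
as `± t^k · f(t) · f(t⁻¹)` for any `f ∈ ℤ[t,t⁻¹]` and `k ∈ ℤ` (Fox–Milnor condition
for the figure eight knot). -/
theorem figure_eight_not_fox_milnor :
    ¬ ∃ (f : LaurentPolynomial ℤ) (k : ℤ) (ε : ℤ), (ε = 1 ∨ ε = -1) ∧
      (T (-1) - 3 + T 1 : LaurentPolynomial ℤ) =
        ε • (T k * f * laurentInvert f) := by
  rintro ⟨f, k, ε, hsign, h⟩
  set ev := eval₂ (RingHom.id ℤ) (-1)
  have hε : ε.natAbs = 1 := by rcases hsign with rfl | rfl <;> rfl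
  have hinv : ev (laurentInvert f) = ev f := by
    rw [show laurentInvert = invert from rfl, eval₂_invert, inv_neg, inv_one]
  have hfive : (ev f).natAbs * (ev f).natAbs = 5 := by
    simpa [ev, hinv, Int.natAbs_mul, hε, map_ofNat] using
      congrArg (fun p => (ev p).natAbs) h.symm
  exact Nat.not_exists_sq (m := 2) (by norm_num) (by norm_num) ⟨_, hfive⟩
end

section
/- Let ξ = e^{2πi/8} and let X, Y be the 8×8 matrices from the Bing double computation (X with nonzero entries X₁₄ = ξ, X₂₁ = 1, X₃₂ = 1, X₄₃ = −i, X₅₈ = ξ, X₆₅ = −1, X₇₆ = 1, X₈₇ = −ξ; Y with nonzero entries Y₁₅ = ξ, Y₂₈ = −i, Y₃₇ = ξ³, Y₄₆ = ξ⁷, Y₅₁ = i, Y₆₄ = ξ, Y₇₃ = ξ³, Y₈₂ = −1). Then the subgroup of GL(8,ℂ) generated by X and Y is a finite group of 2-power order. -/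
/-!
`X` and `Y` are monomial matrices: each column has a single nonzero entry, and that entry is a
power of `ξ`. Monomial matrices whose permutations lie in a subgroup `S` of `Perm n` and whose
entries lie in a subgroup `U` of the units form a group of order `|S| * |U| ^ n`. Here `U` is the
group of 8th roots of unity, and the permutations underlying `X` and `Y` generate a dihedral group
of order 8, so `⟨X, Y⟩` lies in a group whose order is a power of 2.
-/

open Complex

open Equiv

namespace Matrix

variable {n R : Type*} [DecidableEq n]

section Semiring

variable [Semiring R]

def monomial (σ : Perm n) (a : n → R) : Matrix n n R :=
  of fun i j => if i = σ j then a j else 0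

@[simp]
lemma monomial_apply (σ : Perm n) (a : n → R) (i j : n) :
    monomial σ a i j = if i = σ j then a j else 0 :=
  rfl

lemma monomial_one_one : monomial (1 : Perm n) (fun _ => (1 : R)) = 1 := by
  ext i j
  simp only [monomial_apply, one_apply]
  rfl

lemma monomial_inj {σ τ : Perm n} {a b : n → R} (ha : ∀ j, a j ≠ 0) :
    monomial σ a = monomial τ b ↔ σ = τ ∧ a = b := by
  refine ⟨fun h => ?_, by rintro ⟨rfl, rfl⟩; rfl⟩
  have hcol (j : n) : a j = if σ j = τ j then b j else 0 := by
    simpa using congrFun (congrFun h (σ j)) j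
  have hσ (j : n) : σ j = τ j := by
    by_contra hne
    exact ha j (by simpa [hne] using hcol j)
  exact ⟨Equiv.ext hσ, funext fun j => by simpa [hσ j] using hcol j⟩

variable [Fintype n]

lemma monomial_mul_monomial (σ τ : Perm n) (a b : n → R) :
    monomial σ a * monomial τ b = monomial (σ * τ) fun j => a (τ j) * b j := by
  ext i j
  rw [mul_apply, Finset.sum_eq_single (τ j) (fun k _ hk => by simp [hk]) (by simp)]
  simp only [monomial_apply, ite_mul, zero_mul]
  rfl

end Semiring

namespace GeneralLinearGroup

variable [Fintype n] [Semiring R]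

def monomial (σ : Perm n) (a : n → Rˣ) : GL n R where
  val := Matrix.monomial σ fun j => a j
  inv := Matrix.monomial σ⁻¹ fun j => ↑(a (σ⁻¹ j))⁻¹
  val_inv := by simp [monomial_mul_monomial, monomial_one_one]
  inv_val := by simp [monomial_mul_monomial, monomial_one_one]

lemma monomial_mul_monomial (σ τ : Perm n) (a b : n → Rˣ) :
    monomial σ a * monomial τ b = monomial (σ * τ) fun j => a (τ j) * b j := by
  ext : 1
  simp [monomial, Matrix.monomial_mul_monomial]

lemma monomial_inv (σ : Perm n) (a : n → Rˣ) :
    (monomial σ a)⁻¹ = monomial σ⁻¹ fun j => (a (σ⁻¹ j))⁻¹ :=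
  Units.ext rfl

lemma monomial_one_one : monomial (1 : Perm n) (fun _ => (1 : Rˣ)) = 1 :=
  Units.ext Matrix.monomial_one_one

lemma monomial_injective [Nontrivial R] :
    Function.Injective fun p : Perm n × (n → Rˣ) => monomial p.1 p.2 := by
  rintro ⟨σ, a⟩ ⟨τ, b⟩ h
  obtain ⟨rfl, hab⟩ := (monomial_inj fun j => (a j).ne_zero).1 (congrArg Units.val h)
  simp only [Prod.mk.injEq, true_and]
  exact funext fun j => Units.ext (congrFun hab j)

def monomialSubgroup (S : Subgroup (Perm n)) (U : Subgroup Rˣ) : Subgroup (GL n R) where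
  carrier := Set.range fun p : S × (n → U) => monomial p.1 fun j => p.2 j
  one_mem' := ⟨1, monomial_one_one⟩
  mul_mem' := by
    rintro _ _ ⟨⟨σ, a⟩, rfl⟩ ⟨⟨τ, b⟩, rfl⟩
    exact ⟨⟨σ * τ, fun j => a ((τ : Perm n) j) * b j⟩,
      (monomial_mul_monomial (σ : Perm n) τ (fun j => (a j : Rˣ)) fun j => b j).symm⟩
  inv_mem' := by
    rintro _ ⟨⟨σ, a⟩, rfl⟩
    exact ⟨⟨σ⁻¹, fun j => (a ((σ : Perm n)⁻¹ j))⁻¹⟩,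
      (monomial_inv (σ : Perm n) fun j => (a j : Rˣ)).symm⟩

variable {S : Subgroup (Perm n)} {U : Subgroup Rˣ}

lemma monomial_mem_monomialSubgroup {σ : Perm n} {a : n → Rˣ} (hσ : σ ∈ S)
    (ha : ∀ j, a j ∈ U) : monomial σ a ∈ monomialSubgroup S U :=
  ⟨⟨⟨σ, hσ⟩, fun j => ⟨a j, ha j⟩⟩, rfl⟩

instance [Finite U] : Finite (monomialSubgroup S U) :=
  (Set.finite_range _).to_subtype

lemma card_monomialSubgroup [Nontrivial R] :
    Nat.card (monomialSubgroup S U) = Nat.card S * Nat.card U ^ Fintype.card n := by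
  have hinj : Function.Injective fun p : S × (n → U) => monomial (R := R) p.1 fun j => p.2 j :=
    monomial_injective.comp
      (f := fun p : S × (n → U) => ((p.1 : Perm n), fun j => (p.2 j : Rˣ)))
      fun p q h => by
        simp only [Prod.mk.injEq] at h
        exact Prod.ext (Subtype.ext h.1) (funext fun j => Subtype.ext (congrFun h.2 j))
  calc Nat.card (monomialSubgroup S U) = Nat.card (S × (n → U)) :=
        Nat.card_range_of_injective hinj
    _ = Nat.card S * Nat.card U ^ Fintype.card n := by
        rw [Nat.card_prod, Nat.card_fun, Nat.card_eq_fintype_card (α := n)]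

lemma isPGroup_monomialSubgroup [Nontrivial R] {p : ℕ} [Fact p.Prime] [Finite U]
    (hS : IsPGroup p S) (hU : IsPGroup p U) : IsPGroup p (monomialSubgroup S U) := by
  obtain ⟨k, hk⟩ := IsPGroup.iff_card.1 hS
  obtain ⟨l, hl⟩ := IsPGroup.iff_card.1 hU
  exact IsPGroup.of_card (n := k + l * Fintype.card n) <| by
    rw [card_monomialSubgroup, hk, hl, pow_add, pow_mul]

end GeneralLinearGroup

end Matrix

namespace BingDouble

def permX : Perm (Fin 8) :=
  ⟨![1, 2, 3, 0, 5, 6, 7, 4], ![3, 0, 1, 2, 7, 4, 5, 6], by decide, by decide⟩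

def permY : Perm (Fin 8) :=
  ⟨![4, 7, 6, 5, 0, 3, 2, 1], ![4, 7, 6, 5, 0, 3, 2, 1], by decide, by decide⟩

/-- The dihedral group of order 8 generated by `permX` and `permY`, as a list of maps. -/
def dihedralMaps : List (Fin 8 → Fin 8) :=
  [![0, 1, 2, 3, 4, 5, 6, 7], ![1, 2, 3, 0, 5, 6, 7, 4], ![2, 3, 0, 1, 6, 7, 4, 5],
    ![3, 0, 1, 2, 7, 4, 5, 6], ![4, 7, 6, 5, 0, 3, 2, 1], ![5, 4, 7, 6, 1, 0, 3, 2],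
    ![6, 5, 4, 7, 2, 1, 0, 3], ![7, 6, 5, 4, 3, 2, 1, 0]]

lemma comp_mem_dihedralMaps {f g : Fin 8 → Fin 8} (hf : f ∈ dihedralMaps)
    (hg : g ∈ dihedralMaps) : f ∘ g ∈ dihedralMaps := by
  fin_cases hf <;> fin_cases hg <;> decide

lemma iterate_four_of_mem_dihedralMaps {f : Fin 8 → Fin 8} (hf : f ∈ dihedralMaps) :
    f^[4] = id := by
  fin_cases hf <;> decide

lemma coe_mem_dihedralMaps {g : Perm (Fin 8)} (hg : g ∈ Subgroup.closure {permX, permY}) :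
    ⇑g ∈ dihedralMaps := by
  rw [← Subgroup.mem_toSubmonoid, Subgroup.closure_toSubmonoid_of_finite] at hg
  induction hg using Submonoid.closure_induction with
  | mem g hg => rcases hg with rfl | rfl <;> decide
  | one => decide
  | mul g h _ _ hg hh => rw [Perm.coe_mul]; exact comp_mem_dihedralMaps hg hh

lemma isPGroup_closure_permX_permY : IsPGroup 2 (Subgroup.closure {permX, permY}) := fun g =>
  ⟨2, Subtype.ext <| Equiv.ext fun x =>
    congrFun (iterate_four_of_mem_dihedralMaps (coe_mem_dihedralMaps g.2)) x⟩

lemma exp_two_pi_I_div_eight_pow_four : cexp (2 * Real.pi * I / 8) ^ 4 = -1 := by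
  rw [← Complex.exp_nat_mul, ← Complex.exp_pi_mul_I]
  push_cast
  ring_nf

end BingDouble

open BingDouble Matrix.GeneralLinearGroup

/-- The subgroup of `GL(8,ℂ)` generated by the explicit matrices
`X, Y` of the Bing double computation is a finite group of 2-power order. -/
theorem bing_double_representation_two_group :
    let ξ : ℂ := Complex.exp (2 * Real.pi * Complex.I / 8)
    let i : ℂ := ξ ^ 2
    let X : Matrix (Fin 8) (Fin 8) ℂ :=
      !![0, 0, 0, ξ, 0, 0, 0, 0;
         1, 0, 0, 0, 0, 0, 0, 0;
         0, 1, 0, 0, 0, 0, 0, 0;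
         0, 0, -i, 0, 0, 0, 0, 0;
         0, 0, 0, 0, 0, 0, 0, ξ;
         0, 0, 0, 0, -1, 0, 0, 0;
         0, 0, 0, 0, 0, 1, 0, 0;
         0, 0, 0, 0, 0, 0, -ξ, 0]
    let Y : Matrix (Fin 8) (Fin 8) ℂ :=
      !![0, 0, 0, 0, ξ, 0, 0, 0;
         0, 0, 0, 0, 0, 0, 0, -i;
         0, 0, 0, 0, 0, 0, ξ ^ 3, 0;
         0, 0, 0, 0, 0, ξ ^ 7, 0, 0;
         i, 0, 0, 0, 0, 0, 0, 0;
         0, 0, 0, ξ, 0, 0, 0, 0;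
         0, 0, ξ ^ 3, 0, 0, 0, 0, 0;
         0, -1, 0, 0, 0, 0, 0, 0]
    ∀ X' Y' : Matrix.GeneralLinearGroup (Fin 8) ℂ,
      (X' : Matrix (Fin 8) (Fin 8) ℂ) = X →
      (Y' : Matrix (Fin 8) (Fin 8) ℂ) = Y →
      ∃ n : ℕ, Nat.card (Subgroup.closure ({X', Y'} :
        Set (Matrix.GeneralLinearGroup (Fin 8) ℂ))) = 2 ^ n := by
  intro ξ i X Y X' Y' hX hY
  have hξ4 : ξ ^ 4 = -1 := exp_two_pi_I_div_eight_pow_four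
  have hξ5 : ξ ^ 5 = -ξ := by linear_combination ξ * hξ4
  have hξ6 : ξ ^ 6 = -ξ ^ 2 := by linear_combination ξ ^ 2 * hξ4
  have hξ8 : ξ ^ 8 = 1 := by linear_combination (ξ ^ 4 - 1) * hξ4
  set ζ : ℂˣ := Units.ofPowEqOne ξ 8 hξ8 (by norm_num)
  have hζ : ζ ∈ rootsOfUnity 8 ℂ :=
    (_root_.mem_rootsOfUnity _ _).2 (Units.pow_ofPowEqOne _ _)
  have hX' : X' = monomial permX fun j => ζ ^ ![0, 0, 6, 1, 4, 0, 5, 1] j :=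
    Units.ext <| hX.trans <| by
      ext a b
      fin_cases a <;> fin_cases b <;>
        simp [X, i, permX, Matrix.monomial, monomial, ζ, hξ4, hξ5, hξ6]
  have hY' : Y' = monomial permY fun j => ζ ^ ![2, 4, 3, 1, 1, 7, 3, 6] j :=
    Units.ext <| hY.trans <| by
      ext a b
      fin_cases a <;> fin_cases b <;>
        simp [Y, i, permY, Matrix.monomial, monomial, ζ, hξ4, hξ6]
  have hle : Subgroup.closure {X', Y'} ≤
      monomialSubgroup (Subgroup.closure {permX, permY}) (rootsOfUnity 8 ℂ) := by
    rw [Subgroup.closure_le, Set.insert_subset_iff, Set.singleton_subset_iff, hX', hY']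
    exact ⟨monomial_mem_monomialSubgroup (Subgroup.subset_closure (by simp))
        fun _ => pow_mem hζ _,
      monomial_mem_monomialSubgroup (Subgroup.subset_closure (by simp)) fun _ => pow_mem hζ _⟩
  have hU : IsPGroup 2 (rootsOfUnity 8 ℂ) :=
    IsPGroup.of_card (n := 3) (Complex.card_rootsOfUnity 8)
  obtain ⟨k, hk⟩ :=
    IsPGroup.iff_card.1 (isPGroup_monomialSubgroup isPGroup_closure_permX_permY hU)
  obtain ⟨m, -, hm⟩ := (Nat.dvd_prime_pow Nat.prime_two).1 (hk ▸ Subgroup.card_dvd_of_le hle)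
  exact ⟨m, hm⟩
end

section
/- Let p be a prime, let P(k) ⊆ GL(k,ℂ) denote the group of k×k permutation matrices and D(k) ⊆ GL(k,ℂ) the group of diagonal matrices. Suppose X₁, …, Xₙ ∈ GL(k,ℂ) can each be written Xᵢ = Pᵢ Dᵢ with Pᵢ ∈ P(k) and Dᵢ diagonal with all diagonal entries p-power roots of unity, such that the subgroup generated by P₁, …, Pₙ is finite of p-power order. Then the subgroup of GL(k,ℂ) generated by X₁, …, Xₙ is a finite p-group. -/
/-!
Choose `N` such that every diagonal entry of every `Dᵢ` is a `p ^ N`-th root of unity. The diagonal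
matrices with `p ^ N`-th roots of unity on the diagonal form a finite abelian `p`-group `A`, and
conjugating by a permutation matrix only permutes diagonal entries. So the `p`-group `H` generated
by the `Pᵢ` normalizes `A`, whence `H ⊔ A = H * A` is a finite `p`-group containing every
`Xᵢ = Pᵢ * Dᵢ`.
-/

open Matrix Equiv

namespace Matrix

variable {n R : Type*} [Fintype n] [DecidableEq n]

theorem permMatrix_mul_diagonal [NonAssocSemiring R] (σ : Perm n) (d : n → R) :
    σ.permMatrix R * diagonal d = diagonal (d ∘ σ) * σ.permMatrix R := by
  rw [Perm.permMatrix, PEquiv.toMatrix_toPEquiv_mul, PEquiv.mul_toMatrix_toPEquiv]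
  ext i j
  simp only [submatrix_apply, diagonal_apply]
  grind

variable (n R) [CommRing R]

def diagonalUnits : (n → Rˣ) →* GL n R :=
  (Units.map (diagonalRingHom n R).toMonoidHom).comp MulEquiv.piUnits.symm.toMonoidHom

@[simp]
theorem val_diagonalUnits (d : n → Rˣ) :
    (diagonalUnits n R d : Matrix n n R) = diagonal fun i => (d i : R) :=
  rfl

def diagonalRootsOfUnity (m : ℕ) : Subgroup (GL n R) :=
  ((diagonalUnits n R).comp ((rootsOfUnity m R).subtype.compLeft n)).range

variable {n R}

theorem diagonal_mem_diagonalRootsOfUnity {m : ℕ} [NeZero m] {g : GL n R} {d : n → R}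
    (hg : (g : Matrix n n R) = diagonal d) (hd : ∀ i, d i ^ m = 1) :
    g ∈ diagonalRootsOfUnity n R m :=
  ⟨fun i => rootsOfUnity.mkOfPowEq (d i) (hd i), Units.ext (by simp [hg])⟩

instance [IsDomain R] (m : ℕ) [NeZero m] : Finite (diagonalRootsOfUnity n R m) :=
  Finite.of_surjective _ (MonoidHom.rangeRestrict_surjective _)

theorem isPGroup_diagonalRootsOfUnity (p s : ℕ) :
    IsPGroup p (diagonalRootsOfUnity n R (p ^ s)) :=
  IsPGroup.of_surjective
    (fun ζ => ⟨s, funext fun i => Subtype.ext ((mem_rootsOfUnity _ _).mp (ζ i).2)⟩)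
    _ (MonoidHom.rangeRestrict_surjective _)

theorem mem_normalizer_diagonalRootsOfUnity [IsDomain R] {m : ℕ} [NeZero m] {g : GL n R}
    {σ : Perm n} (hg : (g : Matrix n n R) = σ.permMatrix R) :
    g ∈ Subgroup.normalizer (diagonalRootsOfUnity n R m : Set (GL n R)) := by
  have : Finite (diagonalRootsOfUnity n R m : Set (GL n R)) :=
    inferInstanceAs (Finite (diagonalRootsOfUnity n R m))
  refine Subgroup.mem_normalizer_fintype ?_
  rintro _ ⟨ζ, rfl⟩
  refine ⟨ζ ∘ σ, (mul_inv_eq_of_eq_mul (Units.ext ?_)).symm⟩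
  simp [hg, permMatrix_mul_diagonal]
  rfl

end Matrix

theorem IsPGroup.exists_card_eq_of_le_sup {G : Type*} [Group G] {p : ℕ} [Fact p.Prime]
    {H A K : Subgroup G} [Finite H] [Finite A] (hH : IsPGroup p H) (hA : IsPGroup p A)
    (hHA : H ≤ Subgroup.normalizer (A : Set G)) (hK : K ≤ H ⊔ A) :
    ∃ s : ℕ, Nat.card K = p ^ s := by
  have : Finite (H ⊔ A : Subgroup G) := by
    refine Set.Finite.to_subtype ?_
    rw [Subgroup.coe_mul_of_left_le_normalizer_right H A hHA]
    exact (Set.toFinite _).mul (Set.toFinite _)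
  have : Finite K := Finite.of_injective _ (Subgroup.inclusion_injective hK)
  exact IsPGroup.iff_card.mp ((hH.to_sup_of_normal_right' hA hHA).to_le hK)

theorem exists_forall_pow_prime_pow_eq_one {ι M : Type*} [Finite ι] [Monoid M] {p : ℕ}
    {x : ι → M} (hx : ∀ i, ∃ s : ℕ, x i ^ p ^ s = 1) : ∃ s : ℕ, ∀ i, x i ^ p ^ s = 1 := by
  choose s hs using hx
  obtain ⟨S, hS⟩ := Finite.exists_le s
  refine ⟨S, fun i => ?_⟩
  obtain ⟨c, hc⟩ := pow_dvd_pow p (hS i)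
  rw [hc, pow_mul, hs, one_pow]

/-- If `X₁, …, Xₙ ∈ GL(k,ℂ)` can each be written `Xᵢ = Pᵢ Dᵢ` with
`Pᵢ` a permutation matrix and `Dᵢ` diagonal with `p`-power root of unity entries,
and the subgroup generated by the `Pᵢ` is finite of `p`-power order, then the
subgroup generated by the `Xᵢ` is a finite `p`-group. -/
theorem perm_diag_generates_p_group (p : ℕ) (hp : p.Prime) (k n : ℕ)
    (X P D : Fin n → Matrix.GeneralLinearGroup (Fin k) ℂ)
    (hXPD : ∀ i, X i = P i * D i)
    (hP : ∀ i, ∃ σ : Equiv.Perm (Fin k),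
      ((P i : Matrix.GeneralLinearGroup (Fin k) ℂ) : Matrix (Fin k) (Fin k) ℂ)
        = σ.permMatrix ℂ)
    (hD : ∀ i, ∃ d : Fin k → ℂ,
      ((D i : Matrix.GeneralLinearGroup (Fin k) ℂ) : Matrix (Fin k) (Fin k) ℂ)
          = Matrix.diagonal d ∧ ∀ j, ∃ s : ℕ, d j ^ p ^ s = 1)
    (hPgrp : ∃ s : ℕ, Nat.card (Subgroup.closure (Set.range P)) = p ^ s) :
    ∃ s : ℕ, Nat.card (Subgroup.closure (Set.range X)) = p ^ s := by
  have : Fact p.Prime := ⟨hp⟩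
  obtain ⟨s, hs⟩ := hPgrp
  have : Finite (Subgroup.closure (Set.range P)) :=
    Nat.finite_of_card_ne_zero (hs ▸ (pow_pos hp.pos s).ne')
  choose σ hσ using hP
  choose d hd hroot using hD
  obtain ⟨N, hN⟩ := exists_forall_pow_prime_pow_eq_one (x := Function.uncurry d)
    fun ij => hroot ij.1 ij.2
  refine IsPGroup.exists_card_eq_of_le_sup (A := diagonalRootsOfUnity (Fin k) ℂ (p ^ N))
    (IsPGroup.iff_card.mpr ⟨s, hs⟩) (isPGroup_diagonalRootsOfUnity p N) ?_ ?_
  · rw [Subgroup.closure_le]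
    rintro _ ⟨i, rfl⟩
    exact mem_normalizer_diagonalRootsOfUnity (hσ i)
  · rw [Subgroup.closure_le]
    rintro _ ⟨i, rfl⟩
    rw [hXPD i]
    exact Subgroup.mul_mem _ (Subgroup.mem_sup_left (Subgroup.subset_closure ⟨i, rfl⟩))
      (Subgroup.mem_sup_right (diagonal_mem_diagonalRootsOfUnity (hd i) fun j => hN (i, j)))
end

section
/- Let K be a knot with Seifert matrix B (a 2g×2g integer matrix with det(B − Bᵗ) = 1) and Alexander polynomial Δ_K(t) = det(Bᵗ − tB). Suppose B is metabolic, i.e., there is an invertible integer matrix P such that PBPᵗ has a g×g block of zeros in the upper-left corner. Then Δ_K(t) = ± t^g · f(t) · f(t⁻¹) for some integer Laurent polynomial f, where f(t) = det of the upper-right g×g block of P(Bᵗ − tB)Pᵗ up to units. -/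
/-!
Put `C = P B Pᵀ`. Then `M = P (Bᵀ - t B) Pᵀ = Cᵀ - t C` has the same determinant as `Bᵀ - t B`
because `det P = ±1`, and its upper-left block vanishes with that of `C`, so
`det M = (-1)^g · det M₁₂ · det M₂₁`. The lower-left block is the transpose of
`C₁₂ - t C₂₁ᵀ = -t · (C₂₁ᵀ - t⁻¹ C₁₂)`, that is of `-t` times `M₁₂` evaluated at `t⁻¹`.
Hence `det M₂₁ = (-t)^g f(t⁻¹)` with `f = det M₁₂`, and `Δ(t) = t^g f(t) f(t⁻¹)` with no sign.
-/

open LaurentPolynomial Polynomial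

theorem laurentInvert_eq_invert : laurentInvert = invert := rfl

theorem Polynomial.toLaurent_C_sub_X_mul_C {R : Type*} [CommRing R] (u v : R) :
    toLaurent (Polynomial.C v - X * Polynomial.C u) =
      -T 1 * invert (toLaurent (Polynomial.C u - X * Polynomial.C v)) := by
  have hT : (T 1 : R[T;T⁻¹]) * T (-1) = 1 := by rw [← T_add, add_neg_cancel, T_zero]
  simp only [map_sub, map_mul, Polynomial.toLaurent_C, Polynomial.toLaurent_X, invert_C, invert_T]
  linear_combination -(LaurentPolynomial.C v) * hT

namespace Equiv.Perm

theorem sign_sumComm (n : Type*) [Fintype n] [DecidableEq n] :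
    sign (Equiv.sumComm n n) = (-1) ^ Fintype.card n := by
  have h := sign_eq_sign_of_equiv (prodCongrLeft fun _ : n => swap false true)
    (Equiv.sumComm n n) (boolProdEquivSum n) (by rintro ⟨_ | _, x⟩ <;> rfl)
  rw [← h, sign_prodCongrLeft, Finset.prod_const, sign_swap Bool.false_ne_true, Finset.card_univ]

end Equiv.Perm

namespace Matrix

variable {l m n R : Type*} [CommRing R]

theorem det_fromBlocks_zero₁₁ [Fintype n] [DecidableEq n] (B C D : Matrix n n R) :
    (fromBlocks 0 B C D).det = (-1) ^ Fintype.card n * B.det * C.det := by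
  have hswap := det_permute' (Equiv.sumComm n n) (fromBlocks 0 B C D)
  rw [Equiv.sumComm_apply, fromBlocks_submatrix_sum_swap_right, submatrix_id_id,
    det_fromBlocks_zero₁₂, Equiv.Perm.sign_sumComm] at hswap
  rw [mul_assoc, hswap]
  push_cast
  rw [← mul_assoc, ← mul_pow, neg_one_mul, neg_neg, one_pow, one_mul]

noncomputable def pencil (U V : Matrix m n R) : Matrix m n R[X] :=
  U.map Polynomial.C - (X : R[X]) • V.map Polynomial.C

theorem map_mul_pencil_mul_map [Fintype m] [Fintype n] (P : Matrix l m R) (U V : Matrix m n R)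
    (Q : Matrix n l R) :
    P.map Polynomial.C * pencil U V * Q.map Polynomial.C = pencil (P * U * Q) (P * V * Q) := by
  simp only [pencil, Matrix.mul_sub, Matrix.sub_mul, Matrix.mul_smul, Matrix.smul_mul,
    ← Matrix.map_mul]

theorem map_toLaurent_pencil_swap (U V : Matrix m n R) :
    (pencil V U).map toLaurent = (-T 1 : R[T;T⁻¹]) • ((pencil U V).map toLaurent).map invert :=
  Matrix.ext fun i j => Polynomial.toLaurent_C_sub_X_mul_C (U i j) (V i j)

theorem toLaurent_det_pencil_swap [Fintype n] [DecidableEq n] (U V : Matrix n n R) :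
    toLaurent (pencil V U).det =
      (-T 1) ^ Fintype.card n * invert (toLaurent (pencil U V).det) := by
  rw [RingHom.map_det, RingHom.mapMatrix_apply, map_toLaurent_pencil_swap, det_smul,
    RingHom.map_det, AlgEquiv.map_det]
  rfl

theorem toLaurent_det_pencil_transpose_self [Fintype n] [DecidableEq n]
    (C : Matrix (n ⊕ n) (n ⊕ n) R) (h : C.toBlocks₁₁ = 0) :
    toLaurent (pencil Cᵀ C).det = T (Fintype.card n) * toLaurent (pencil Cᵀ C).toBlocks₁₂.det *
      invert (toLaurent (pencil Cᵀ C).toBlocks₁₂.det) := by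
  have h₁₁ : (pencil Cᵀ C).toBlocks₁₁ = 0 := by
    change pencil C.toBlocks₁₁ᵀ C.toBlocks₁₁ = 0
    simp [h, pencil]
  have h₁₂ : (pencil Cᵀ C).toBlocks₁₂ = pencil C.toBlocks₂₁ᵀ C.toBlocks₁₂ := rfl
  have h₂₁ : (pencil Cᵀ C).toBlocks₂₁ = (pencil C.toBlocks₁₂ C.toBlocks₂₁ᵀ)ᵀ := rfl
  have hdet : (pencil Cᵀ C).det = (-1) ^ Fintype.card n * (pencil Cᵀ C).toBlocks₁₂.det *
      (pencil Cᵀ C).toBlocks₂₁.det := by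
    conv_lhs => rw [← fromBlocks_toBlocks (pencil Cᵀ C), h₁₁]
    exact det_fromBlocks_zero₁₁ _ _ _
  have hsign : ((-1) ^ Fintype.card n * (-T 1) ^ Fintype.card n : R[T;T⁻¹]) =
      T (Fintype.card n) := by
    rw [← mul_pow, neg_one_mul, neg_neg, T_pow, mul_one]
  rw [hdet, map_mul, map_mul, map_pow, map_neg, map_one, h₂₁, det_transpose,
    toLaurent_det_pencil_swap, ← h₁₂, ← hsign]
  ring

end Matrix

theorem fox_milnor_of_metabolic_general (g : ℕ)
    (B : Matrix (Fin g ⊕ Fin g) (Fin g ⊕ Fin g) ℤ)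
    (P : Matrix (Fin g ⊕ Fin g) (Fin g ⊕ Fin g) ℤ)
    (hP : IsUnit P.det)
    (hmeta : (P * B * P.transpose).toBlocks₁₁ = 0) :
    let Δ : Polynomial ℤ :=
      ((B.transpose.map Polynomial.C) - (Polynomial.X : Polynomial ℤ) • (B.map Polynomial.C)).det
    let fblock : Polynomial ℤ :=
      ((P.map Polynomial.C *
          ((B.transpose.map Polynomial.C) - (Polynomial.X : Polynomial ℤ) • (B.map Polynomial.C)) *
          (P.map Polynomial.C).transpose).toBlocks₁₂).det
    ∃ f : LaurentPolynomial ℤ,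
      (∃ (ε : ℤ) (j : ℤ), (ε = 1 ∨ ε = -1) ∧
        f = ε • (T j * Polynomial.toLaurent fblock)) ∧
      ∃ ε' : ℤ, (ε' = 1 ∨ ε' = -1) ∧
        Polynomial.toLaurent Δ = ε' • (T (g : ℤ) * f * laurentInvert f) := by
  intro Δ fblock
  set C := P * B * P.transpose
  have hconj : P.map Polynomial.C * Matrix.pencil B.transpose B * (P.map Polynomial.C).transpose =
      Matrix.pencil C.transpose C := by
    rw [← Matrix.transpose_map, Matrix.map_mul_pencil_mul_map, Matrix.transpose_mul,
      Matrix.transpose_mul, Matrix.transpose_transpose, Matrix.mul_assoc]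
  have hΔ : (Matrix.pencil C.transpose C).det = Δ := by
    rw [← hconj, Matrix.det_mul, Matrix.det_mul, Matrix.det_transpose, ← RingHom.mapMatrix_apply,
      ← RingHom.map_det, mul_right_comm, ← map_mul, ← sq, Int.isUnit_sq hP, map_one, one_mul]
    rfl
  have hf : fblock = (Matrix.pencil C.transpose C).toBlocks₁₂.det := by
    rw [← hconj]
    rfl
  refine ⟨toLaurent fblock, ⟨1, 0, Or.inl rfl, by rw [T_zero, one_mul, one_smul]⟩,
    1, Or.inl rfl, ?_⟩
  rw [one_smul, ← hΔ, Matrix.toLaurent_det_pencil_transpose_self C hmeta, hf, Fintype.card_fin,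
    laurentInvert_eq_invert]

/-- If a Seifert matrix `B` (a `2g×2g` integer matrix with
`det(B − Bᵗ) = 1`) is metabolic, i.e. congruent over `ℤ` to a matrix with
vanishing upper-left `g×g` block, then the Alexander polynomial
`Δ(t) = det(Bᵗ − tB)` satisfies the Fox–Milnor factorization
`Δ(t) = ± t^g · f(t) · f(t⁻¹)`, where `f` is, up to units, the determinant of the
upper-right `g×g` block of `P(Bᵗ − tB)Pᵗ`. -/
theorem fox_milnor_of_metabolic (g : ℕ)
    (B : Matrix (Fin g ⊕ Fin g) (Fin g ⊕ Fin g) ℤ)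
    (hB : (B - B.transpose).det = 1)
    (P : Matrix (Fin g ⊕ Fin g) (Fin g ⊕ Fin g) ℤ)
    (hP : IsUnit P.det)
    (hmeta : (P * B * P.transpose).toBlocks₁₁ = 0) :
    let Δ : Polynomial ℤ :=
      ((B.transpose.map Polynomial.C) - (Polynomial.X : Polynomial ℤ) • (B.map Polynomial.C)).det
    let fblock : Polynomial ℤ :=
      ((P.map Polynomial.C *
          ((B.transpose.map Polynomial.C) - (Polynomial.X : Polynomial ℤ) • (B.map Polynomial.C)) *
          (P.map Polynomial.C).transpose).toBlocks₁₂).det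
    ∃ f : LaurentPolynomial ℤ,
      (∃ (ε : ℤ) (j : ℤ), (ε = 1 ∨ ε = -1) ∧
        f = ε • (T j * Polynomial.toLaurent fblock)) ∧
      ∃ ε' : ℤ, (ε' = 1 ∨ ε' = -1) ∧
        Polynomial.toLaurent Δ = ε' • (T (g : ℤ) * f * laurentInvert f) :=
  fox_milnor_of_metabolic_general g B P hP hmeta
end
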